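/- Population-level double robustness: define ψ := Σ_x ℙ(X = x | R = false) · E[Y | X = x, A = a, R = true] and, for functions g : 𝒳 → ℝ, e : 𝒳 → (0, 1], p : 𝒳 → (0, 1), define Φ(g, e, p) := (1/ℙ(R = false)) · E[ ((1 − p(X(ω))) · 1{R = true, A = a}(ω) / (e(X(ω)) · p(X(ω)))) · (Y(ω) − g(X(ω))) + 1{R = false}(ω) · g(X(ω)) ]. If either (i) g(x) = E[Y | X = x, A = a, R = true] for all x in the support of X, or (ii) p(x) = ℙ(R = true | X = x) and e(x) = ℙ(A = a | X = x, R = true) for all x in the support of X, then Φ(g, e, p) = ψ. -/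

import Mathlib

open Finset

attribute [local instance] Classical.propDecidable

variable {Ω : Type*}

/-- Probability of an event. -/
noncomputable def pr [Fintype Ω] (P : Ω → ℝ) (E : Ω → Prop) : ℝ :=
  ∑ ω, if E ω then P ω else 0

/-- Expectation of a real random variable. -/
noncomputable def ex [Fintype Ω] (P : Ω → ℝ) (Z : Ω → ℝ) : ℝ :=
  ∑ ω, P ω * Z ω

/-- Conditional probability ℙ(F | E) = ℙ(F ∩ E)/ℙ(E). -/
noncomputable def cpr [Fintype Ω] (P : Ω → ℝ) (F E : Ω → Prop) : ℝ :=
  pr P (fun ω => F ω ∧ E ω) / pr P E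

/-- Conditional expectation E[Z | E] = E[Z·1_E]/ℙ(E). -/
noncomputable def cex [Fintype Ω] (P : Ω → ℝ) (Z : Ω → ℝ) (E : Ω → Prop) : ℝ :=
  (∑ ω, if E ω then P ω * Z ω else 0) / pr P E

/-! On the fibre `X = x` write `m = ℙ(X = x, A = a, R = true)`, `n = ℙ(X = x, R = false)`,
`μ = E[Y | X = x, A = a, R = true]` and `w = (1 - p x) / (e x * p x)`. The fibre contributes
`w * m * (μ - g x) + g x * n` to `ℙ(R = false) * Φ` and `n * μ` to `ℙ(R = false) * ψ`. The two agree
when `g x = μ`, since the residual then vanishes, and when `w * m = n`, which is what the true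
participation and treatment probabilities give; on null fibres `m = n = 0`. -/

section Probability

variable [Fintype Ω] (P : Ω → ℝ)

lemma pr_congr {E F : Ω → Prop} (h : ∀ ω, E ω ↔ F ω) : pr P E = pr P F := by
  simp only [pr, h]

lemma pr_nonneg (hP0 : ∀ ω, 0 ≤ P ω) (E : Ω → Prop) : 0 ≤ pr P E :=
  sum_nonneg fun ω _ => ite_nonneg (hP0 ω) le_rfl

lemma eq_zero_of_pr_eq_zero (hP0 : ∀ ω, 0 ≤ P ω) {E : Ω → Prop} (hE : pr P E = 0) {ω : Ω}
    (hω : E ω) : P ω = 0 := by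
  have h := (sum_eq_zero_iff_of_nonneg fun ω _ => ite_nonneg (hP0 ω) le_rfl).mp hE ω (mem_univ ω)
  simpa [hω] using h

lemma pr_mono (hP0 : ∀ ω, 0 ≤ P ω) {E F : Ω → Prop} (h : ∀ ω, E ω → F ω) :
    pr P E ≤ pr P F :=
  sum_le_sum fun ω _ => by
    by_cases hE : E ω
    · simp [hE, h ω hE]
    · by_cases hF : F ω <;> simp [hE, hF, hP0 ω]

lemma pr_eq_zero_of_imp (hP0 : ∀ ω, 0 ≤ P ω) {E F : Ω → Prop} (h : ∀ ω, E ω → F ω)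
    (hF : pr P F = 0) : pr P E = 0 :=
  le_antisymm (hF ▸ pr_mono P hP0 h) (pr_nonneg P hP0 E)

lemma pr_and_add_pr_and_not (E F : Ω → Prop) :
    pr P (fun ω => E ω ∧ F ω) + pr P (fun ω => E ω ∧ ¬F ω) = pr P E := by
  simp only [pr, ← sum_add_distrib]
  refine sum_congr rfl fun ω _ => ?_
  by_cases hE : E ω <;> by_cases hF : F ω <;> simp [hE, hF]

-- `pr` and `cex` decide events classically; these two lemmas accept any decidability instance.
lemma pr_eq_sum_ite (E : Ω → Prop) [DecidablePred E] :
    pr P E = ∑ ω, if E ω then P ω else 0 := by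
  unfold pr
  congr!

lemma sum_ite_mul_eq_cex_mul_pr (hP0 : ∀ ω, 0 ≤ P ω) (Z : Ω → ℝ) (E : Ω → Prop)
    [DecidablePred E] : (∑ ω, if E ω then P ω * Z ω else 0) = cex P Z E * pr P E := by
  rw [show (∑ ω, if E ω then P ω * Z ω else 0)
    = ∑ ω, @ite _ (E ω) (Classical.propDecidable _) (P ω * Z ω) 0 by congr!]
  rcases (pr_nonneg P hP0 E).eq_or_lt with hE | hE
  · rw [← hE, mul_zero]
    refine sum_eq_zero fun ω _ => ?_
    split_ifs with hω
    · rw [eq_zero_of_pr_eq_zero P hP0 hE.symm hω, zero_mul]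
    · rfl
  · rw [cex, div_mul_cancel₀ _ hE.ne']

lemma ex_eq_sum_fiber {𝒳 : Type*} [Fintype 𝒳] (X : Ω → 𝒳) (Z : Ω → ℝ) :
    ex P Z = ∑ x, ∑ ω, if X ω = x then P ω * Z ω else 0 := by
  rw [ex, sum_comm]
  simp

lemma ex_weighted_residual_add_eq_sum {𝒳 : Type*} [Fintype 𝒳] (hP0 : ∀ ω, 0 ≤ P ω)
    (X : Ω → 𝒳) (B C : Ω → Prop) [DecidablePred B] [DecidablePred C] (w g : 𝒳 → ℝ)
    (Y : Ω → ℝ) :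
    ex P (fun ω => w (X ω) * (if B ω then 1 else 0) * (Y ω - g (X ω))
        + (if C ω then 1 else 0) * g (X ω))
      = ∑ x, (w x * pr P (fun ω => X ω = x ∧ B ω)
            * (cex P Y (fun ω => X ω = x ∧ B ω) - g x)
          + g x * pr P (fun ω => X ω = x ∧ C ω)) := by
  rw [ex_eq_sum_fiber P X]
  refine sum_congr rfl fun x _ => ?_
  have hpoint : ∀ ω, (if X ω = x then P ω * (w (X ω) * (if B ω then 1 else 0) * (Y ω - g (X ω))
        + (if C ω then 1 else 0) * g (X ω)) else 0)
      = w x * ((if X ω = x ∧ B ω then P ω * Y ω else 0)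
          - g x * (if X ω = x ∧ B ω then P ω else 0))
        + g x * (if X ω = x ∧ C ω then P ω else 0) := fun ω => by
    by_cases hX : X ω = x
    · by_cases hB : B ω <;> by_cases hC : C ω <;> simp [hX, hB, hC] <;> ring
    · simp [hX]
  rw [sum_congr rfl fun ω _ => hpoint ω, sum_add_distrib, ← mul_sum, ← mul_sum,
    sum_sub_distrib, ← mul_sum, sum_ite_mul_eq_cex_mul_pr P hP0, pr_eq_sum_ite, pr_eq_sum_ite]
  ring

lemma inverse_weight_mul_eq {q r m n : ℝ} (hq : q = r + n) (hr : 0 < r) (hn : 0 ≤ n)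
    (hm : m ≠ 0) : (1 - r / q) / (m / r * (r / q)) * m = n := by
  have hq0 : q ≠ 0 := by linarith
  field_simp
  linarith

lemma inverse_weight_mul_pr_eq (hP0 : ∀ ω, 0 ≤ P ω) {E F G : Ω → Prop}
    (hm : 0 < pr P (fun ω => G ω ∧ E ω ∧ F ω)) :
    (1 - cpr P F E) / (cpr P G (fun ω => E ω ∧ F ω) * cpr P F E)
        * pr P (fun ω => E ω ∧ G ω ∧ F ω)
      = pr P (fun ω => E ω ∧ ¬F ω) := by
  have hr : pr P (fun ω => F ω ∧ E ω) = pr P (fun ω => E ω ∧ F ω) := pr_congr P fun ω => and_comm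
  have hm' : pr P (fun ω => E ω ∧ G ω ∧ F ω) = pr P (fun ω => G ω ∧ E ω ∧ F ω) :=
    pr_congr P fun ω => by tauto
  rw [cpr, cpr, hr, hm']
  refine inverse_weight_mul_eq (pr_and_add_pr_and_not P E F).symm
    (hm.trans_le (pr_mono P hP0 fun ω h => h.2)) (pr_nonneg P hP0 _) hm.ne'

end Probability

lemma doubly_robust_fiber_identity {w m μ g n : ℝ} (h : g = μ ∨ w * m = n) :
    w * m * (μ - g) + g * n = n * μ := by
  rcases h with rfl | rfl <;> ring

theorem double_robustness_general
    {𝒳 𝒯 : Type*} [Fintype Ω] [Fintype 𝒳]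
    (P : Ω → ℝ) (hP0 : ∀ ω, 0 ≤ P ω)
    (X : Ω → 𝒳) (A : Ω → 𝒯) (Y : Ω → ℝ) (R : Ω → Bool) (a : 𝒯)
    -- positivity
    (hpos : ∀ x, 0 < pr P (fun ω => X ω = x) →
      0 < pr P (fun ω => A ω = a ∧ X ω = x ∧ R ω = true))
    -- nuisance functions with the stated ranges
    (g p e : 𝒳 → ℝ)
    -- double robustness hypothesis: (i) or (ii)
    (hdr :
      (∀ x, 0 < pr P (fun ω => X ω = x) →
        g x = cex P Y (fun ω => X ω = x ∧ A ω = a ∧ R ω = true))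
      ∨ ((∀ x, 0 < pr P (fun ω => X ω = x) →
            p x = cpr P (fun ω => R ω = true) (fun ω => X ω = x))
          ∧ (∀ x, 0 < pr P (fun ω => X ω = x) →
            e x = cpr P (fun ω => A ω = a) (fun ω => X ω = x ∧ R ω = true)))) :
    (pr P (fun ω => R ω = false))⁻¹
        * ex P (fun ω =>
            ((1 - p (X ω)) * (if R ω = true ∧ A ω = a then (1 : ℝ) else 0)
                / (e (X ω) * p (X ω)))
              * (Y ω - g (X ω))
            + (if R ω = false then (1 : ℝ) else 0) * g (X ω))
      = ∑ x, cpr P (fun ω => X ω = x) (fun ω => R ω = false)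
          * cex P Y (fun ω => X ω = x ∧ A ω = a ∧ R ω = true) := by
  simp only [mul_div_right_comm, and_comm (a := R _ = true)]
  rw [ex_weighted_residual_add_eq_sum P hP0 X _ _ (fun x => (1 - p x) / (e x * p x)) g Y, mul_sum]
  refine sum_congr rfl fun x _ => ?_
  rw [doubly_robust_fiber_identity ?_, cpr]
  · ring
  rcases (pr_nonneg P hP0 fun ω => X ω = x).eq_or_lt with hnull | hx
  · right
    rw [pr_eq_zero_of_imp P hP0 (fun ω h => h.1) hnull.symm,
      pr_eq_zero_of_imp P hP0 (fun ω h => h.1) hnull.symm, mul_zero]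
  rcases hdr with hg | ⟨hp, he⟩
  · exact Or.inl (hg x hx)
  · right
    rw [hp x hx, he x hx, inverse_weight_mul_pr_eq P hP0 (hpos x hx)]
    exact pr_congr P fun ω => by simp

/-- Population-level double robustness: the doubly robust functional
Φ(g, e, p) equals ψ if either the outcome model or both the participation and
treatment models are correctly specified. -/
theorem double_robustness
    {𝒳 𝒯 : Type*} [Fintype Ω] [Fintype 𝒳] [Fintype 𝒯]
    (P : Ω → ℝ) (hP0 : ∀ ω, 0 ≤ P ω) (hP1 : ∑ ω, P ω = 1)
    (X : Ω → 𝒳) (A : Ω → 𝒯) (Y : Ω → ℝ) (R : Ω → Bool) (a : 𝒯)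
    -- positivity
    (hposT : 0 < pr P (fun ω => R ω = false))
    (hpos : ∀ x, 0 < pr P (fun ω => X ω = x) →
      0 < pr P (fun ω => A ω = a ∧ X ω = x ∧ R ω = true))
    -- nuisance functions with the stated ranges
    (g p e : 𝒳 → ℝ) (hp : ∀ x, 0 < p x ∧ p x < 1) (he : ∀ x, 0 < e x ∧ e x ≤ 1)
    -- double robustness hypothesis: (i) or (ii)
    (hdr :
      (∀ x, 0 < pr P (fun ω => X ω = x) →
        g x = cex P Y (fun ω => X ω = x ∧ A ω = a ∧ R ω = true))
      ∨ ((∀ x, 0 < pr P (fun ω => X ω = x) →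
            p x = cpr P (fun ω => R ω = true) (fun ω => X ω = x))
          ∧ (∀ x, 0 < pr P (fun ω => X ω = x) →
            e x = cpr P (fun ω => A ω = a) (fun ω => X ω = x ∧ R ω = true)))) :
    (pr P (fun ω => R ω = false))⁻¹
        * ex P (fun ω =>
            ((1 - p (X ω)) * (if R ω = true ∧ A ω = a then (1 : ℝ) else 0)
                / (e (X ω) * p (X ω)))
              * (Y ω - g (X ω))
            + (if R ω = false then (1 : ℝ) else 0) * g (X ω))
      = ∑ x, cpr P (fun ω => X ω = x) (fun ω => R ω = false)
          * cex P Y (fun ω => X ω = x ∧ A ω = a ∧ R ω = true) :=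
  double_robustness_general P hP0 X A Y R a hpos g p e hdr
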